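/- Let G be a bipartite constraint graph with order ≺ and β : V → {1,2} such that every pair u ≺ v satisfies δ(u,v) ≥ β(v) − 1. Fix v ∈ V, and let f be an integer-valued map defined on {u : u ≺ v} such that for all u,w ≺ v with δ(u,w) < ∞, |f(u) − f(w)| ≤ δ(u,w) and f(u) + f(w) + δ(u,w) is even. If at least one u ≺ v has δ(u,v) < ∞, then the set of integers belonging to every interval [f(u) − δ(u,v), f(u) + δ(u,v)] (over all u ≺ v with δ(u,v) < ∞) has at least 2β(v) − 1 elements. -/

import Mathlib

namespace CountingCSP

/-! ## The basic framework

An instance `Ψ` of `{1,2}`-CSP is modelled by a number `m` of variables, the variable set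
being `Fin m` with its natural linear order `<` (the order of quantification `≺`), a function
`β : Fin m → ℕ` taking values in `{1,2}` (variable `v` is quantified by `∃^{≥ β v}`), and a
simple graph `G` on `Fin m` (the constraint graph).  A target graph is a type `B` together
with an adjacency relation `E : B → B → Prop` (loops allowed in general). -/

/-- Adjacency of the finite path `P_n` on the vertices `{1,…,n}`, modelled as `Fin n`. -/
def pathAdj (n : ℕ) (i j : Fin n) : Prop :=
  (i : ℕ) + 1 = j ∨ (j : ℕ) + 1 = i

/-- Adjacency of the infinite path `P_∞` on `ℤ`: `i` and `j` adjacent iff `|i - j| = 1`. -/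
def intPathAdj (i j : ℤ) : Prop := |i - j| = 1

/-- `SatFrom β G E i f` : processing the variables of the instance in `≺`-increasing order
starting from variable `i`, where the earlier variables have been assigned according to `f`,
the instance can be satisfied.  At each variable `v` one asks for a set `S` of `β v` distinct
elements of the target such that for every `b ∈ S` the rest of the instance can be satisfied
with `v ↦ b`; when all variables are assigned, the assignment must be a homomorphism. -/
def SatFrom {m : ℕ} {B : Type*} (β : Fin m → ℕ) (G : SimpleGraph (Fin m))
    (E : B → B → Prop) (i : ℕ) (f : Fin m → B) : Prop :=
  if h : i < m then
    ∃ S : Finset B, S.card = β ⟨i, h⟩ ∧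
      ∀ b ∈ S, SatFrom β G E (i + 1) (Function.update f ⟨i, h⟩ b)
  else ∀ u v : Fin m, G.Adj u v → E (f u) (f v)
termination_by m - i
decreasing_by omega

/-- `Sat β G E` : the instance with quantifiers `β` and constraint graph `G` is satisfied by
the target graph with adjacency `E`  (i.e. `H ⊨ Ψ`).  The initial assignment is irrelevant
since every variable is assigned before it is used. -/
def Sat {m : ℕ} {B : Type*} (β : Fin m → ℕ) (G : SimpleGraph (Fin m))
    (E : B → B → Prop) : Prop :=
  ∀ f : Fin m → B, SatFrom β G E 0 f

/-- A graph is bipartite iff it has a proper 2-colouring. -/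
def Bipartite {V : Type*} (G : SimpleGraph V) : Prop :=
  ∃ c : V → Bool, ∀ u v, G.Adj u v → c u ≠ c v

/-! ## Walks, looping walks, and the distance function δ -/

/-- `λ(Q) = |Q| − 2·∑_{interior vertices x of Q} (β x − 1)`, where `|Q|` is the length
(number of edges) of the walk `Q = x₁,…,x_r`, and the interior vertices are `x₂,…,x_{r−1}`. -/
def lamWalk {m : ℕ} (β : Fin m → ℕ) (Q : List (Fin m)) : ℤ :=
  ((Q.length : ℤ) - 1) - 2 * (((Q.drop 1).dropLast).map (fun x => (β x : ℤ) - 1)).sum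

/-- Looping walks of `G` (with respect to the quantification order `<` on `Fin m`):
a walk `x₁,…,x_r` with `x₁ ≠ x_r` such that if `r ≥ 3` then both endpoints strictly precede
every interior vertex and the walk splits at some interior position into two looping walks. -/
inductive IsLoopingWalk {m : ℕ} (G : SimpleGraph (Fin m)) : List (Fin m) → Prop
  | base {x y : Fin m} : G.Adj x y → IsLoopingWalk G [x, y]
  | comb {x y z : Fin m} {Q₁ Q₂ : List (Fin m)} :
      IsLoopingWalk G (x :: (Q₁ ++ [y])) →
      IsLoopingWalk G (y :: (Q₂ ++ [z])) →
      x ≠ z →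
      (∀ w ∈ Q₁ ++ y :: Q₂, x < w ∧ z < w) →
      IsLoopingWalk G (x :: (Q₁ ++ y :: Q₂ ++ [z]))

/-- `Q` is a looping walk between `u` and `v` (in either direction). -/
def LoopingWalkBetween {m : ℕ} (G : SimpleGraph (Fin m)) (u v : Fin m)
    (Q : List (Fin m)) : Prop :=
  IsLoopingWalk G Q ∧
    ((Q.head? = some u ∧ Q.getLast? = some v) ∨ (Q.head? = some v ∧ Q.getLast? = some u))

/-- `IsDelta G β u v d` : `d = δ(u,v)`, i.e. `d` is the minimum of `λ(Q)` over all looping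
walks `Q` of `G` between `u` and `v`.  (`δ(u,v) < ∞` corresponds to `∃ d, IsDelta G β u v d`.) -/
def IsDelta {m : ℕ} (G : SimpleGraph (Fin m)) (β : Fin m → ℕ) (u v : Fin m) (d : ℤ) : Prop :=
  (∃ Q, LoopingWalkBetween G u v Q ∧ lamWalk β Q = d) ∧
    ∀ Q, LoopingWalkBetween G u v Q → d ≤ lamWalk β Q

/-! ## The functions γ and γ′ -/

/-- `IsGammaVal G β g v t` : `t = max(0, max_{u ≺ v, δ(u,v) < ∞} (g u − δ(u,v) + β v − 1))`. -/
def IsGammaVal {m : ℕ} (G : SimpleGraph (Fin m)) (β : Fin m → ℕ) (g : Fin m → ℤ)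
    (v : Fin m) (t : ℤ) : Prop :=
  0 ≤ t ∧
  (∀ u, u < v → ∀ d, IsDelta G β u v d → g u - d + (β v : ℤ) - 1 ≤ t) ∧
  (t = 0 ∨ ∃ u, u < v ∧ ∃ d, IsDelta G β u v d ∧ t = g u - d + (β v : ℤ) - 1)

/-- `g` is the function `γ`: `γ(v) = 0` for the `≺`-least vertex, and otherwise
`γ(v) = β(v) − 1 + max(0, max_{u ≺ v, δ(u,v) < ∞} (γ(u) − δ(u,v) + β(v) − 1))`. -/
def IsGamma {m : ℕ} (G : SimpleGraph (Fin m)) (β : Fin m → ℕ) (g : Fin m → ℤ) : Prop :=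
  ∀ v : Fin m,
    if (v : ℕ) = 0 then g v = 0
    else ∃ t, IsGammaVal G β g v t ∧ g v = (β v : ℤ) - 1 + t

/-- `g` is the function `γ′`:
`γ′(v) = β(v) − 1 + max(0, max_{u ≺ v, δ(u,v) < ∞} (γ′(u) − δ(u,v) + β(v) − 1))`
(so `γ′(v) = β(v) − 1` for the `≺`-least vertex). -/
def IsGamma' {m : ℕ} (G : SimpleGraph (Fin m)) (β : Fin m → ℕ) (g : Fin m → ℤ) : Prop :=
  ∀ v : Fin m, ∃ t, IsGammaVal G β g v t ∧ g v = (β v : ℤ) - 1 + t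

/-! ## The closure sets (F, R⁺, R⁻) for the {2}-CSP(K₄) algorithm -/

mutual
/-- Membership in the closure set `F` of pairs (initialised as the edge set of `G`). -/
inductive InF {m : ℕ} (G : SimpleGraph (Fin m)) : Finset (Fin m) → Prop
  | edge {x y : Fin m} : G.Adj x y → InF G {x, y}
  | x3a {x y w z : Fin m} : [x, y, w, z].Pairwise (· ≠ ·) →
      x < z → y < z → w < z → ¬(x < w ∧ y < w) →
      InF G {w, z} → InRp G {x, y, z} → InF G {x, w}
  | x3b {x y w z : Fin m} : [x, y, w, z].Pairwise (· ≠ ·) →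
      x < z → y < z → w < z → ¬(x < w ∧ y < w) →
      InF G {w, z} → InRp G {x, y, z} → InF G {y, w}
  | x4 {x y w z : Fin m} : [x, y, w, z].Pairwise (· ≠ ·) →
      x < y → w < y → y < z →
      InRp G {x, y, z} → InRm G {w, y, z} → InF G {x, w}
  | x7a {x y q w z : Fin m} : [x, y, q, w, z].Pairwise (· ≠ ·) →
      x < q → y < q → w < q → q < z → ¬(x < w ∧ y < w) →
      InRp G {x, y, z} → InRm G {w, q, z} → InF G {x, w}
  | x7a' {x y q w z : Fin m} : [x, y, q, w, z].Pairwise (· ≠ ·) →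
      x < q → y < q → w < q → q < z → ¬(x < w ∧ y < w) →
      InRm G {x, y, z} → InRp G {w, q, z} → InF G {x, w}
  | x7b {x y q w z : Fin m} : [x, y, q, w, z].Pairwise (· ≠ ·) →
      x < q → y < q → w < q → q < z → ¬(x < w ∧ y < w) →
      InRp G {x, y, z} → InRm G {w, q, z} → InF G {y, w}
  | x7b' {x y q w z : Fin m} : [x, y, q, w, z].Pairwise (· ≠ ·) →
      x < q → y < q → w < q → q < z → ¬(x < w ∧ y < w) →
      InRm G {x, y, z} → InRp G {w, q, z} → InF G {y, w}

/-- Membership in the closure set `R⁺` of triples. -/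
inductive InRp {m : ℕ} (G : SimpleGraph (Fin m)) : Finset (Fin m) → Prop
  | x2 {x y w z : Fin m} : [x, y, w, z].Pairwise (· ≠ ·) →
      x < z → y < z → w < z →
      InF G {w, z} → InRm G {x, y, z} → InRp G {x, y, w}
  | x4 {x y w z : Fin m} : [x, y, w, z].Pairwise (· ≠ ·) →
      x < y → w < y → y < z →
      InRp G {x, y, z} → InRm G {w, y, z} → InRp G {x, y, w}
  | x5p {x y w z : Fin m} : [x, y, w, z].Pairwise (· ≠ ·) →
      x < z → y < z → w < z →
      InRp G {x, y, z} → InRp G {w, y, z} → InRp G {x, y, w}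
  | x5m {x y w z : Fin m} : [x, y, w, z].Pairwise (· ≠ ·) →
      x < z → y < z → w < z →
      InRm G {x, y, z} → InRm G {w, y, z} → InRp G {x, y, w}
  | x6ap {x y q w z : Fin m} : [x, y, q, w, z].Pairwise (· ≠ ·) →
      x < q → y < q → w < q → q < z →
      InRp G {x, y, z} → InRp G {w, q, z} → InRp G {x, y, w}
  | x6am {x y q w z : Fin m} : [x, y, q, w, z].Pairwise (· ≠ ·) →
      x < q → y < q → w < q → q < z →
      InRm G {x, y, z} → InRm G {w, q, z} → InRp G {x, y, w}
  | x6bp {x y q w z : Fin m} : [x, y, q, w, z].Pairwise (· ≠ ·) →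
      x < q → y < q → w < q → q < z →
      InRp G {x, y, z} → InRp G {w, q, z} → InRp G {x, y, q}
  | x6bm {x y q w z : Fin m} : [x, y, q, w, z].Pairwise (· ≠ ·) →
      x < q → y < q → w < q → q < z →
      InRm G {x, y, z} → InRm G {w, q, z} → InRp G {x, y, q}

/-- Membership in the closure set `R⁻` of triples. -/
inductive InRm {m : ℕ} (G : SimpleGraph (Fin m)) : Finset (Fin m) → Prop
  | x1 {x y z : Fin m} : [x, y, z].Pairwise (· ≠ ·) →
      x < z → y < z →
      InF G {x, z} → InF G {y, z} → InRm G {x, y, z}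
  | x3 {x y w z : Fin m} : [x, y, w, z].Pairwise (· ≠ ·) →
      x < z → y < z → w < z → x < w → y < w →
      InF G {w, z} → InRp G {x, y, z} → InRm G {x, y, w}
  | x7a {x y q w z : Fin m} : [x, y, q, w, z].Pairwise (· ≠ ·) →
      x < q → y < q → w < q → q < z →
      InRp G {x, y, z} → InRm G {w, q, z} → InRm G {x, y, q}
  | x7a' {x y q w z : Fin m} : [x, y, q, w, z].Pairwise (· ≠ ·) →
      x < q → y < q → w < q → q < z →
      InRm G {x, y, z} → InRp G {w, q, z} → InRm G {x, y, q}
  | x7b {x y q w z : Fin m} : [x, y, q, w, z].Pairwise (· ≠ ·) →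
      x < q → y < q → w < q → q < z → x < w → y < w →
      InRp G {x, y, z} → InRm G {w, q, z} → InRm G {x, y, w}
  | x7b' {x y q w z : Fin m} : [x, y, q, w, z].Pairwise (· ≠ ·) →
      x < q → y < q → w < q → q < z → x < w → y < w →
      InRm G {x, y, z} → InRp G {w, q, z} → InRm G {x, y, w}
end

/-!
Gluing looping walks `u … v` and `v … w` at the later vertex `v` gives a looping walk
`u … w`, so `δ(u,w) ≤ δ(u,v) + δ(v,w) − 2(β(v) − 1)` (the minimum `δ(u,w)` exists because
looping walks have bounded length). With `|f(u) − f(w)| ≤ δ(u,w)`, and `δ(u,v) ≥ β(v) − 1`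
when `u = w`, the intervals `[f(u) − δ(u,v), f(u) + δ(u,v)]` shrunk by `β(v) − 1` at both ends
still pairwise meet, hence share a point `c`, and `[c − β(v) + 1, c + β(v) − 1]` lies in
all of the original intervals.
-/

theorem exists_between_of_forall_le {ι α : Type*} [ConditionallyCompleteLattice α]
    {s : Set ι} {a b : ι → α} (h : ∀ i ∈ s, ∀ j ∈ s, a i ≤ b j) :
    ∃ c, ∀ i ∈ s, a i ≤ c ∧ c ≤ b i :=
  ⟨sSup (a '' s), fun i hi =>
    ⟨le_csSup ⟨b i, by rintro _ ⟨j, hj, rfl⟩; exact h j hj i hi⟩ ⟨i, hi, rfl⟩,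
      csSup_le ⟨a i, i, hi, rfl⟩ (by rintro _ ⟨j, hj, rfl⟩; exact h j hj i hi)⟩⟩

theorem dropLast_drop_one_cons_append_singleton {α : Type*} (a b : α) (L : List α) :
    ((a :: (L ++ [b])).drop 1).dropLast = L := by
  simp only [List.drop_succ_cons, List.drop_zero, List.dropLast_concat]

section LoopingWalk

variable {m : ℕ} {G : SimpleGraph (Fin m)}

theorem IsLoopingWalk.exists_eq_cons_append_singleton {Q : List (Fin m)}
    (h : IsLoopingWalk G Q) : ∃ a L b, Q = a :: (L ++ [b]) := by
  cases h with
  | base => exact ⟨_, [], _, rfl⟩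
  | @comb x y z Q₁ Q₂ => exact ⟨x, Q₁ ++ y :: Q₂, z, by simp⟩

theorem IsLoopingWalk.lt_of_mem_interior {a b t : Fin m} {L : List (Fin m)}
    (h : IsLoopingWalk G (a :: (L ++ [b]))) (ht : t ∈ L) : a < t ∧ b < t := by
  generalize hQ : a :: (L ++ [b]) = Q at h
  cases h with
  | base =>
    obtain rfl : L = [] := by simpa using congrArg List.length hQ
    simp at ht
  | @comb x y z Q₁ Q₂ _ _ _ hmem =>
    obtain ⟨rfl, hL⟩ := List.cons_eq_cons.1 hQ
    obtain ⟨rfl, hb⟩ := List.append_inj' hL rfl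
    obtain rfl : b = z := by simpa using hb
    exact hmem t ht

theorem IsLoopingWalk.reverse {Q : List (Fin m)} (h : IsLoopingWalk G Q) :
    IsLoopingWalk G Q.reverse := by
  induction h with
  | base hadj => simpa using IsLoopingWalk.base hadj.symm
  | @comb x y z Q₁ Q₂ _ _ hxz hmem ih₁ ih₂ =>
    simp only [List.reverse_cons, List.reverse_append] at ih₁ ih₂
    have hmem' : ∀ w ∈ Q₂.reverse ++ y :: Q₁.reverse, z < w ∧ x < w := fun w hw =>
      (hmem w (by simp only [List.mem_append, List.mem_cons, List.mem_reverse] at hw ⊢; tauto)).symm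
    simpa using IsLoopingWalk.comb (by simpa using ih₂) (by simpa using ih₁) hxz.symm hmem'

theorem IsLoopingWalk.length_interior_lt {Q : List (Fin m)} (h : IsLoopingWalk G Q)
    (S : Finset (Fin m)) (hS : ∀ x ∈ (Q.drop 1).dropLast, x ∈ S) :
    ((Q.drop 1).dropLast).length < 2 ^ S.card := by
  induction h generalizing S with
  | base => simp
  | @comb x y z Q₁ Q₂ h₁ h₂ _ _ ih₁ ih₂ =>
    simp only [dropLast_drop_one_cons_append_singleton] at hS ih₁ ih₂ ⊢
    have hy : y ∈ S := hS y (by simp)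
    -- `y` is an endpoint of both halves, so neither interior contains it
    have b₁ := ih₁ (S.erase y) fun t ht =>
      Finset.mem_erase.2 ⟨(h₁.lt_of_mem_interior ht).2.ne', hS t (by simp [ht])⟩
    have b₂ := ih₂ (S.erase y) fun t ht =>
      Finset.mem_erase.2 ⟨(h₂.lt_of_mem_interior ht).1.ne', hS t (by simp [ht])⟩
    rw [Finset.card_erase_of_mem hy] at b₁ b₂
    have hpow : 2 ^ S.card = 2 * 2 ^ (S.card - 1) := by
      rw [← pow_succ', Nat.sub_add_cancel (Finset.card_pos.2 ⟨y, hy⟩)]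
    simp only [List.length_append, List.length_cons]
    omega

theorem IsLoopingWalk.length_le {Q : List (Fin m)} (h : IsLoopingWalk G Q) :
    Q.length ≤ 2 ^ m + 1 := by
  have := h.length_interior_lt Finset.univ fun x _ => Finset.mem_univ x
  simp only [List.length_dropLast, List.length_drop, Finset.card_univ, Fintype.card_fin] at this
  omega

theorem setOf_isLoopingWalk_finite : {Q | IsLoopingWalk G Q}.Finite :=
  (List.finite_length_le (Fin m) (2 ^ m + 1)).subset fun _ h => IsLoopingWalk.length_le h

theorem lamWalk_cons_append_singleton (β : Fin m → ℕ) (a b : Fin m) (L : List (Fin m)) :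
    lamWalk β (a :: (L ++ [b])) =
      (L.length + 1 : ℤ) - 2 * (L.map fun x => (β x : ℤ) - 1).sum := by
  simp [lamWalk]

variable {β : Fin m → ℕ}

theorem exists_isDelta {u w : Fin m} (hne : ∃ Q, LoopingWalkBetween G u w Q) :
    ∃ d, IsDelta G β u w d := by
  obtain ⟨Q, hQ, hmin⟩ := Set.exists_min_image _ (lamWalk β)
    (setOf_isLoopingWalk_finite.subset fun _ h => h.1) hne
  exact ⟨lamWalk β Q, ⟨Q, hQ, rfl⟩, hmin⟩

theorem LoopingWalkBetween.exists_oriented {u w : Fin m} {Q : List (Fin m)}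
    (h : LoopingWalkBetween G u w Q) :
    ∃ L, IsLoopingWalk G (u :: (L ++ [w])) ∧ lamWalk β (u :: (L ++ [w])) = lamWalk β Q := by
  obtain ⟨hQ, hends⟩ := h
  obtain ⟨a, L, b, rfl⟩ := hQ.exists_eq_cons_append_singleton
  simp only [← List.cons_append, List.head?_append, List.head?_cons, List.getLast?_concat,
    Option.some_or, Option.some.injEq] at hends
  rcases hends with ⟨rfl, rfl⟩ | ⟨rfl, rfl⟩
  · exact ⟨L, hQ, rfl⟩
  · refine ⟨L.reverse, by simpa using hQ.reverse, ?_⟩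
    simp only [lamWalk_cons_append_singleton, List.map_reverse, List.sum_reverse,
      List.length_reverse]

theorem loopingWalkBetween_comb {u w v : Fin m} (huv : u < v) (hwv : w < v) (huw : u ≠ w)
    {L₁ L₂ : List (Fin m)} (h₁ : IsLoopingWalk G (u :: (L₁ ++ [v])))
    (h₂ : IsLoopingWalk G (v :: (L₂ ++ [w]))) :
    ∃ Q, LoopingWalkBetween G u w Q ∧
      lamWalk β Q = lamWalk β (u :: (L₁ ++ [v])) + lamWalk β (v :: (L₂ ++ [w]))
        - 2 * ((β v : ℤ) - 1) := by
  have hwalk : IsLoopingWalk G (u :: (L₁ ++ v :: L₂ ++ [w])) := by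
    refine .comb h₁ h₂ huw fun t ht => ?_
    simp only [List.mem_append, List.mem_cons] at ht
    rcases ht with ht | rfl | ht
    · exact ⟨(h₁.lt_of_mem_interior ht).1, hwv.trans (h₁.lt_of_mem_interior ht).2⟩
    · exact ⟨huv, hwv⟩
    · exact ⟨huv.trans (h₂.lt_of_mem_interior ht).1, (h₂.lt_of_mem_interior ht).2⟩
  refine ⟨_, ⟨hwalk, .inl ⟨rfl, by rw [← List.cons_append, List.getLast?_concat]⟩⟩, ?_⟩
  rw [List.append_assoc, ← List.append_assoc, lamWalk_cons_append_singleton,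
    lamWalk_cons_append_singleton, lamWalk_cons_append_singleton]
  simp only [List.map_append, List.sum_append, List.map_cons, List.sum_cons,
    List.length_append, List.length_cons]
  push_cast
  ring

theorem exists_isDelta_le_add {u w v : Fin m} (huv : u < v) (hwv : w < v) (huw : u ≠ w)
    {d e : ℤ} (hd : IsDelta G β u v d) (he : IsDelta G β w v e) :
    ∃ d', IsDelta G β u w d' ∧ d' ≤ d + e - 2 * ((β v : ℤ) - 1) := by
  obtain ⟨⟨Q₁, hQ₁, rfl⟩, -⟩ := hd
  obtain ⟨⟨Q₂, hQ₂, rfl⟩, -⟩ := he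
  obtain ⟨L₁, hL₁, hlam₁⟩ := hQ₁.exists_oriented (β := β)
  obtain ⟨L₂, hL₂, hlam₂⟩ := LoopingWalkBetween.exists_oriented (β := β)
    ⟨hQ₂.1, hQ₂.2.symm⟩
  obtain ⟨Q, hQ, hlam⟩ := loopingWalkBetween_comb (β := β) huv hwv huw hL₁ hL₂
  obtain ⟨d', hd'⟩ := exists_isDelta (β := β) ⟨Q, hQ⟩
  exact ⟨d', hd', by linarith [hd'.2 Q hQ]⟩

end LoopingWalk

/-- Let `G` be bipartite with `δ(u,v) ≥ β(v) − 1` for all `u ≺ v`.  Fix `v`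
and let `f` be integer-valued on `{u : u ≺ v}` satisfying `(⋆)` and `(△)` there.  If some
`u ≺ v` has `δ(u,v) < ∞`, then the set of integers lying in every interval
`[f(u) − δ(u,v), f(u) + δ(u,v)]` (over `u ≺ v` with `δ(u,v) < ∞`) has at least `2β(v) − 1`
elements. -/
theorem intersection_of_intervals_large {m : ℕ} (β : Fin m → ℕ)
    (hβ : ∀ v, β v = 1 ∨ β v = 2) (G : SimpleGraph (Fin m)) (hbip : Bipartite G)
    (hmin : ∀ u v : Fin m, u < v → ∀ d : ℤ, IsDelta G β u v d → (β v : ℤ) - 1 ≤ d)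
    (v : Fin m) (f : Fin m → ℤ)
    (hf : ∀ u w : Fin m, u < v → w < v → ∀ d : ℤ, IsDelta G β u w d →
      |f u - f w| ≤ d ∧ Even (f u + f w + d))
    (hne : ∃ u, u < v ∧ ∃ d : ℤ, IsDelta G β u v d) :
    ∃ s : Finset ℤ, 2 * β v - 1 ≤ s.card ∧
      ∀ x ∈ s, ∀ u : Fin m, u < v → ∀ d : ℤ, IsDelta G β u v d →
        f u - d ≤ x ∧ x ≤ f u + d := by
  set k : ℤ := (β v : ℤ) - 1
  obtain ⟨c, hc⟩ := exists_between_of_forall_le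
    (s := {p : Fin m × ℤ | p.1 < v ∧ IsDelta G β p.1 v p.2})
    (a := fun p => f p.1 - p.2 + k) (b := fun p => f p.1 + p.2 - k) <| by
    rintro ⟨u, d⟩ ⟨hu, hd⟩ ⟨w, e⟩ ⟨hw, he⟩
    show f u - d + k ≤ f w + e - k
    rcases eq_or_ne u w with rfl | huw
    · linarith [hmin u v hu d hd, hmin u v hu e he]
    · obtain ⟨d', hd', hle⟩ := exists_isDelta_le_add hu hw huw hd he
      linarith [(abs_le.1 (hf u w hu hw d' hd').1).2]
  refine ⟨Finset.Icc (c - k) (c + k), by rw [Int.card_Icc]; omega, fun x hx u hu d hd => ?_⟩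
  obtain ⟨hx₁, hx₂⟩ := Finset.mem_Icc.1 hx
  obtain ⟨h₁, h₂⟩ := hc (u, d) ⟨hu, hd⟩
  constructor <;> dsimp only at h₁ h₂ <;> linarith

end CountingCSP
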